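/- For every collection A of k binary sequences in {0,1}^ℓ there exists a collection A' of k sequences in ℤ^{ℓ'} with ℓ' ≤ 2^k such that OPT(A') = OPT(A). -/

import Mathlib

/-!
Coordinates whose columns `(a₁ j, …, a_k j)` coincide can be merged into a single coordinate
whose entries are scaled by the number of merged columns. Merging does not increase the optimum:
summing a centre over the merged coordinates gives a centre for the merged instance, by the
triangle inequality. Nor does it decrease it: a value `y` of the merged coordinate is split over
the `m` original coordinates as evenly as possible (`⌊y / m⌋` or `⌊y / m⌋ + 1`), so that for every
integer `c` all the differences to `c` have the same sign and no distance is lost. Binary columns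
take at most `2^k` values.
-/

/-- Manhattan distance between two integer sequences with coordinates indexed by `ι`. -/
def manhattanDist {ι : Type} [Fintype ι] (x y : ι → ℤ) : ℤ := ∑ j, |x j - y j|

/-- Manhattan distance from a sequence to a collection of `k` sequences. -/
def manhattanDistA {k : ℕ} {ι : Type} [Fintype ι] (hk : 0 < k) (a : Fin k → ι → ℤ)
    (x : ι → ℤ) : ℤ :=
  Finset.univ.sup' ⟨⟨0, hk⟩, Finset.mem_univ _⟩ fun i => manhattanDist x (a i)

/-- `OPT(A)`: the optimal (minimal) distance to the collection. -/
noncomputable def manhattanOPT {k : ℕ} {ι : Type} [Fintype ι] (hk : 0 < k)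
    (a : Fin k → ι → ℤ) : ℤ :=
  sInf {d : ℤ | ∃ x : ι → ℤ, manhattanDistA hk a x = d}

open Finset

lemma Finset.sum_abs_eq_abs_sum_of_eq_or_eq_add_one {ι : Type*} {s : Finset ι} {f : ι → ℤ}
    {c : ℤ} (h : ∀ j ∈ s, f j = c ∨ f j = c + 1) : ∑ j ∈ s, |f j| = |∑ j ∈ s, f j| := by
  rcases le_or_gt 0 c with hc | hc
  · have hf : ∀ j ∈ s, 0 ≤ f j := fun j hj => by rcases h j hj with h' | h' <;> omega
    rw [abs_of_nonneg (sum_nonneg hf)]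
    exact sum_congr rfl fun j hj => abs_of_nonneg (hf j hj)
  · have hf : ∀ j ∈ s, f j ≤ 0 := fun j hj => by rcases h j hj with h' | h' <;> omega
    rw [abs_of_nonpos (sum_nonpos hf), ← sum_neg_distrib]
    exact sum_congr rfl fun j hj => abs_of_nonpos (hf j hj)

lemma abs_sum_sub_card_mul_le_sum_abs {ι : Type*} (s : Finset ι) (x : ι → ℤ) (c : ℤ) :
    |∑ j ∈ s, x j - #s * c| ≤ ∑ j ∈ s, |x j - c| := by
  rw [← nsmul_eq_mul, ← sum_const, ← sum_sub_distrib]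
  exact abs_sum_le_sum_abs _ _

lemma exists_sum_abs_sub_le_abs_sub_card_mul {ι : Type*} (s : Finset ι) (y : ℤ) :
    ∃ x : ι → ℤ, ∀ c : ℤ, ∑ j ∈ s, |x j - c| ≤ |y - #s * c| := by
  classical
  rcases s.eq_empty_or_nonempty with rfl | hs
  · exact ⟨0, fun c => by simp⟩
  set m : ℤ := (#s : ℤ) with hm
  have hm_pos : 0 < m := by rw [hm]; exact_mod_cast hs.card_pos
  have hr : 0 ≤ y % m := Int.emod_nonneg _ hm_pos.ne'
  obtain ⟨S, hSs, hS⟩ := exists_subset_card_eq (s := s) (n := (y % m).toNat) (by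
    have := Int.emod_lt_of_pos y hm_pos
    omega)
  refine ⟨fun j => y / m + if j ∈ S then 1 else 0, fun c => le_of_eq ?_⟩
  rw [sum_abs_eq_abs_sum_of_eq_or_eq_add_one (c := y / m - c)
    fun j _ => by dsimp only; split_ifs <;> [right; left] <;> ring]
  have hS_sum : ∑ j ∈ s, (if j ∈ S then (1 : ℤ) else 0) = y % m := by
    rw [sum_ite_mem, inter_eq_right.mpr hSs, sum_const, nsmul_one, hS, Int.toNat_of_nonneg hr]
  simp only [add_sub_right_comm, sum_add_distrib, sum_const, nsmul_eq_mul, ← hm, hS_sum]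
  congr 1
  linear_combination Int.mul_ediv_add_emod y m

section
variable {ι κ : Type} [Fintype ι] [Fintype κ]

lemma manhattanDist_eq_sum_fiberwise [DecidableEq κ] (x v : ι → ℤ) (f : ι → κ) (w : κ → ℤ)
    (hvw : ∀ j, v j = w (f j)) :
    manhattanDist x v = ∑ p, ∑ j with f j = p, |x j - w p| := by
  rw [manhattanDist, ← sum_fiberwise univ f]
  refine sum_congr rfl fun p _ => sum_congr rfl fun j hj => ?_
  rw [hvw, (mem_filter.mp hj).2]

variable {k : ℕ} (hk : 0 < k)

lemma manhattanOPT_le_of_forall_exists_dist_le {a : Fin k → ι → ℤ} {a' : Fin k → κ → ℤ}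
    (h : ∀ x, ∃ y, ∀ i, manhattanDist y (a' i) ≤ manhattanDist x (a i)) :
    manhattanOPT hk a' ≤ manhattanOPT hk a := by
  have hbdd : BddBelow (Set.range (manhattanDistA hk a')) := ⟨0, by
    rintro _ ⟨y, rfl⟩
    exact (sum_nonneg fun _ _ => abs_nonneg _).trans
      (le_sup' (fun i => manhattanDist y (a' i)) (mem_univ ⟨0, hk⟩))⟩
  refine le_csInf (Set.range_nonempty _) ?_
  rintro _ ⟨x, rfl⟩
  obtain ⟨y, hy⟩ := h x
  exact (csInf_le hbdd ⟨y, rfl⟩).trans (sup'_mono_fun fun i _ => hy i)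

theorem manhattanOPT_merge_eq [DecidableEq κ] (a : Fin k → ι → ℤ) (f : ι → κ)
    (c : Fin k → κ → ℤ) (hac : ∀ i j, a i j = c i (f j)) :
    manhattanOPT hk (fun i p => #{j | f j = p} * c i p) = manhattanOPT hk a := by
  apply le_antisymm
  · refine manhattanOPT_le_of_forall_exists_dist_le hk fun x =>
      ⟨fun p => ∑ j with f j = p, x j, fun i => ?_⟩
    rw [manhattanDist_eq_sum_fiberwise x (a i) f (c i) (hac i), manhattanDist]
    exact sum_le_sum fun p _ => abs_sum_sub_card_mul_le_sum_abs _ _ _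
  · refine manhattanOPT_le_of_forall_exists_dist_le hk fun y => ?_
    choose x hx using fun p => exists_sum_abs_sub_le_abs_sub_card_mul {j | f j = p} (y p)
    refine ⟨fun j => x (f j) j, fun i => ?_⟩
    rw [manhattanDist_eq_sum_fiberwise _ (a i) f (c i) (hac i), manhattanDist]
    refine sum_le_sum fun p _ => le_of_eq_of_le (sum_congr rfl fun j hj => ?_) (hx p (c i p))
    rw [(mem_filter.mp hj).2]

end

/-- every collection of `k` binary sequences has an equivalent
collection (same Manhattan consensus optimum) of `k` integer sequences of length
at most `2^k`. -/
theorem stmt7 {ℓ k : ℕ} (hk : 0 < k) (a : Fin k → Fin ℓ → ℤ)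
    (hbin : ∀ i j, a i j = 0 ∨ a i j = 1) :
    ∃ ℓ' : ℕ, ℓ' ≤ 2 ^ k ∧
      ∃ a' : Fin k → Fin ℓ' → ℤ, manhattanOPT hk a' = manhattanOPT hk a := by
  let e : (Fin k → Fin 2) ≃ Fin (2 ^ k) := finFunctionFinEquiv
  let column : Fin ℓ → Fin (2 ^ k) := fun j => e fun i => if a i j = 0 then 0 else 1
  exact ⟨2 ^ k, le_rfl, _,
    manhattanOPT_merge_eq hk a column (fun i p => ((e.symm p i : ℕ) : ℤ)) fun i j => by
      rcases hbin i j with h | h <;> simp [column, h]⟩
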